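/- For all vectors α, β ∈ ℂ²⊗ℂ² ≅ ℂ⁴: if ⟨χ_{ij}, α ⊗ β⟩ = 0 for every ordered pair (i,j) with i, j ∈ {1,2,3,4}, i ≠ j and (i,j) ≠ (1,2), then α ⊗ β = 0 (i.e., α = 0 or β = 0). In other words, the 11-element proper subset T := S^{↑↓}_{(2)} \ {χ_{12}} admits no nonzero product vector in its orthogonal complement, so T is itself an unextendible product basis; hence S^{↑↓}_{(2)} is not a genuinely unextendible product basis and, by Duan et al.'s criterion, is not conclusively distinguishable via LOCC. (Key step of Theorem 2.) -/

import Mathlib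

/-!
Since `⟪χ i j, α ⊗ β⟫ = ⟪s_i ⊗ s_j, α⟫ * ⟪s_i^⊥ ⊗ s_j^⊥, β⟫`, every admissible pair `(i, j)`
kills either the bilinear form `(x, y) ↦ ⟪α, x ⊗ y⟫` at `(s_i, s_j)` or the form of `β` at
`(s_i^⊥, s_j^⊥)`. Any two of the `s_j`, and any two of the `s_j^⊥`, span `ℂ²`. For each of the
three rows `i ≠ 1` all three pairs `(i, j)` are admissible, so by pigeonhole one of the two forms
vanishes on the whole row `s_i` resp. `s_i^⊥`; the same pigeonhole over these three rows makes
the form of `α` or of `β` vanish identically, i.e. `α = 0` or `β = 0`.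
-/

noncomputable section
open scoped ComplexInnerProductSpace

/-- The qubit Hilbert space `ℂ²`. -/
abbrev Qubit : Type := EuclideanSpace ℂ (Fin 2)

/-- The (Kronecker) tensor product of two vectors, realized in `EuclideanSpace ℂ (ι × κ)`. -/
def tp {ι κ : Type} (x : EuclideanSpace ℂ ι) (y : EuclideanSpace ℂ κ) :
    EuclideanSpace ℂ (ι × κ) :=
  (WithLp.equiv 2 (ι × κ → ℂ)).symm (fun p => x p.1 * y p.2)

/-- A qubit vector from its two coordinates. -/
def mk2 (a b : ℂ) : Qubit := (WithLp.equiv 2 (Fin 2 → ℂ)).symm ![a, b]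

/-- The cube root of unity phases `ζ k = exp(2πik/3)`. -/
def ζ (k : ℤ) : ℂ := Complex.exp (2 * (Real.pi : ℂ) * Complex.I * (k : ℂ) / 3)

/-- `1/√3` in `ℂ`. -/
def r3 : ℂ := ((Real.sqrt 3 : ℂ))⁻¹

/-- `√2` in `ℂ`. -/
def r2 : ℂ := (Real.sqrt 2 : ℂ)

/-- The qubit SIC states: `s 0 = |0⟩` and
`s j = (1/√3)(|0⟩ + √2 e^{2πi(j-1)/3} |1⟩)` for `j = 1, 2, 3`
(indexing the paper's `s_1, …, s_4` by `Fin 4`). -/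
def s : Fin 4 → Qubit :=
  ![mk2 1 0,
    mk2 r3 (r3 * r2 * ζ 0),
    mk2 r3 (r3 * r2 * ζ 1),
    mk2 r3 (r3 * r2 * ζ 2)]

/-- The orthogonal SIC states: `sperp 0 = |1⟩` and
`sperp j = (1/√3)(√2 e^{-2πi(j-1)/3} |0⟩ - |1⟩)` for `j = 1, 2, 3`. -/
def sperp : Fin 4 → Qubit :=
  ![mk2 0 1,
    mk2 (r3 * r2 * ζ 0) (-r3),
    mk2 (r3 * r2 * ζ (-1)) (-r3),
    mk2 (r3 * r2 * ζ (-2)) (-r3)]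

/-- The 2-CLSM vectors `χ_{ij} = (s_i ⊗ s_j) ⊗ (s_i^⊥ ⊗ s_j^⊥)`, the first `ℂ⁴` factor
being Alice's system and the second Bob's. -/
def χ (i j : Fin 4) : EuclideanSpace ℂ ((Fin 2 × Fin 2) × (Fin 2 × Fin 2)) :=
  tp (tp (s i) (s j)) (tp (sperp i) (sperp j))

section KroneckerProduct

variable {ι κ : Type}

theorem tp_apply (x : EuclideanSpace ℂ ι) (y : EuclideanSpace ℂ κ) (p : ι × κ) :
    tp x y p = x p.1 * y p.2 :=
  rfl

def tpₗ : EuclideanSpace ℂ ι →ₗ[ℂ] EuclideanSpace ℂ κ →ₗ[ℂ] EuclideanSpace ℂ (ι × κ) :=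
  LinearMap.mk₂ ℂ tp
    (fun _ _ _ => by ext; simp [tp_apply, add_mul])
    (fun _ _ _ => by ext; simp [tp_apply, mul_assoc])
    (fun _ _ _ => by ext; simp [tp_apply, mul_add])
    (fun _ _ _ => by ext; simp [tp_apply, mul_left_comm])

theorem tpₗ_apply (x : EuclideanSpace ℂ ι) (y : EuclideanSpace ℂ κ) : tpₗ x y = tp x y :=
  rfl

theorem tp_single_single [DecidableEq ι] [DecidableEq κ] (i : ι) (k : κ) (a b : ℂ) :
    tp (EuclideanSpace.single i a) (EuclideanSpace.single k b) =
      EuclideanSpace.single (i, k) (a * b) := by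
  ext ⟨i', k'⟩
  by_cases hi : i' = i <;> by_cases hk : k' = k <;> simp [tp_apply, hi, hk]

variable [Fintype ι] [Fintype κ]

theorem inner_tp_tp (x u : EuclideanSpace ℂ ι) (y v : EuclideanSpace ℂ κ) :
    ⟪tp x y, tp u v⟫ = ⟪x, u⟫ * ⟪y, v⟫ := by
  simp only [PiLp.inner_apply, RCLike.inner_apply, tp_apply, Fintype.sum_prod_type,
    Finset.sum_mul_sum, map_mul]
  exact Finset.sum_congr rfl fun _ _ => Finset.sum_congr rfl fun _ _ => by ring

def tpForm (γ : EuclideanSpace ℂ (ι × κ)) :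
    EuclideanSpace ℂ ι →ₗ[ℂ] EuclideanSpace ℂ κ →ₗ[ℂ] ℂ :=
  tpₗ.compr₂ (innerₛₗ ℂ γ)

theorem tpForm_apply (γ : EuclideanSpace ℂ (ι × κ)) (x : EuclideanSpace ℂ ι)
    (y : EuclideanSpace ℂ κ) : tpForm γ x y = ⟪γ, tp x y⟫ :=
  rfl

theorem tpForm_eq_zero_iff {γ : EuclideanSpace ℂ (ι × κ)} : tpForm γ = 0 ↔ γ = 0 := by
  classical
  refine ⟨fun h => ?_, fun h => by ext; simp [tpForm_apply, h]⟩
  ext ⟨i, k⟩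
  have := LinearMap.congr_fun₂ h (EuclideanSpace.single i 1) (EuclideanSpace.single k 1)
  simpa [tpForm_apply, tp_single_single, EuclideanSpace.inner_single_right] using this

end KroneckerProduct

section Pigeonhole

variable {R M N ι : Type*} [Semiring R] [AddCommMonoid M] [Module R M] [AddCommMonoid N]
  [Module R N]

theorem Submodule.eq_top_of_pair_mem {U : Submodule R M} {x y : M}
    (hspan : Submodule.span R {x, y} = ⊤) (hx : x ∈ U) (hy : y ∈ U) : U = ⊤ :=
  eq_top_iff.2 (hspan ▸ Submodule.span_le.2 (Set.insert_subset_iff.2 ⟨hx, by simpa using hy⟩))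

theorem eq_top_or_eq_top_of_mem_or_mem {u : ι → M} {v : ι → N}
    (hu : Pairwise fun a b => Submodule.span R {u a, u b} = ⊤)
    (hv : Pairwise fun a b => Submodule.span R {v a, v b} = ⊤)
    {U : Submodule R M} {V : Submodule R N} {a b c : ι} (hab : a ≠ b) (hac : a ≠ c) (hbc : b ≠ c)
    (ha : u a ∈ U ∨ v a ∈ V) (hb : u b ∈ U ∨ v b ∈ V) (hc : u c ∈ U ∨ v c ∈ V) :
    U = ⊤ ∨ V = ⊤ := by
  rcases ha with ha | ha <;> rcases hb with hb | hb
  · exact .inl (U.eq_top_of_pair_mem (hu hab) ha hb)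
  · rcases hc with hc | hc
    · exact .inl (U.eq_top_of_pair_mem (hu hac) ha hc)
    · exact .inr (V.eq_top_of_pair_mem (hv hbc) hb hc)
  · rcases hc with hc | hc
    · exact .inl (U.eq_top_of_pair_mem (hu hbc) hb hc)
    · exact .inr (V.eq_top_of_pair_mem (hv hac) ha hc)
  · exact .inr (V.eq_top_of_pair_mem (hv hab) ha hb)

end Pigeonhole

theorem EuclideanSpace.span_pair_eq_top_of_det_ne_zero {𝕜 : Type*} [RCLike 𝕜]
    {u v : EuclideanSpace 𝕜 (Fin 2)} (h : u 0 * v 1 - u 1 * v 0 ≠ 0) :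
    Submodule.span 𝕜 {u, v} = ⊤ := by
  refine Submodule.eq_top_iff'.2 fun z => Submodule.mem_span_pair.2 ?_
  -- Cramer's rule
  refine ⟨(z 0 * v 1 - z 1 * v 0) / (u 0 * v 1 - u 1 * v 0),
    (u 0 * z 1 - u 1 * z 0) / (u 0 * v 1 - u 1 * v 0), ?_⟩
  refine PiLp.ext (Fin.forall_fin_two.2 ⟨?_, ?_⟩) <;>
  · simp only [PiLp.add_apply, PiLp.smul_apply, smul_eq_mul]
    rw [div_mul_eq_mul_div, div_mul_eq_mul_div, ← add_div, div_eq_iff h]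
    ring

theorem mk2_zero (a b : ℂ) : mk2 a b 0 = a :=
  rfl

theorem mk2_one (a b : ℂ) : mk2 a b 1 = b :=
  rfl

theorem r3_ne_zero : r3 ≠ 0 := by
  simp [r3]

theorem r2_ne_zero : r2 ≠ 0 := by
  simp [r2]

theorem ζ_ne_zero (k : ℤ) : ζ k ≠ 0 :=
  Complex.exp_ne_zero _

theorem ζ_eq_zpow (k : ℤ) : ζ k = Complex.exp (2 * Real.pi * Complex.I / 3) ^ k := by
  rw [ζ, ← Complex.exp_int_mul]
  ring_nf

theorem ζ_ne_ζ {a b : ℤ} (h : ¬ (3 : ℤ) ∣ a - b) : ζ a ≠ ζ b := by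
  intro hab
  refine h (((Complex.isPrimitiveRoot_exp 3 three_ne_zero).zpow_eq_one_iff_dvd _).1 ?_)
  rw [Nat.cast_ofNat, zpow_sub₀ (Complex.exp_ne_zero _), ← ζ_eq_zpow, ← ζ_eq_zpow, hab,
    div_self (ζ_ne_zero b)]

theorem s_zero : s 0 = mk2 1 0 :=
  rfl

theorem sperp_zero : sperp 0 = mk2 0 1 :=
  rfl

theorem s_succ (j : Fin 3) : s j.succ = mk2 r3 (r3 * r2 * ζ j) := by
  fin_cases j <;> rfl

theorem sperp_succ (j : Fin 3) : sperp j.succ = mk2 (r3 * r2 * ζ (-j)) (-r3) := by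
  fin_cases j <;> rfl

theorem s_pairwise_span_eq_top : Pairwise fun i j => Submodule.span ℂ {s i, s j} = ⊤ := by
  intro i j hij
  apply EuclideanSpace.span_pair_eq_top_of_det_ne_zero
  cases i using Fin.cases <;> cases j using Fin.cases
  · exact absurd rfl hij
  · simp [s_zero, s_succ, mk2_zero, mk2_one, r3_ne_zero, r2_ne_zero, ζ_ne_zero]
  · simp [s_zero, s_succ, mk2_zero, mk2_one, r3_ne_zero, r2_ne_zero, ζ_ne_zero]
  · rename_i i j
    rw [ne_eq, Fin.succ_inj] at hij
    have hζ : ζ j ≠ ζ i := ζ_ne_ζ (by omega)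
    rw [s_succ, s_succ, mk2_zero, mk2_one, mk2_zero, mk2_one]
    convert mul_ne_zero (mul_ne_zero (pow_ne_zero 2 r3_ne_zero) r2_ne_zero) (sub_ne_zero.2 hζ)
      using 1
    ring

theorem sperp_pairwise_span_eq_top :
    Pairwise fun i j => Submodule.span ℂ {sperp i, sperp j} = ⊤ := by
  intro i j hij
  apply EuclideanSpace.span_pair_eq_top_of_det_ne_zero
  cases i using Fin.cases <;> cases j using Fin.cases
  · exact absurd rfl hij
  · simp [sperp_zero, sperp_succ, mk2_zero, mk2_one, r3_ne_zero, r2_ne_zero, ζ_ne_zero]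
  · simp [sperp_zero, sperp_succ, mk2_zero, mk2_one, r3_ne_zero, r2_ne_zero, ζ_ne_zero]
  · rename_i i j
    rw [ne_eq, Fin.succ_inj] at hij
    have hζ : ζ (-j) ≠ ζ (-i) := ζ_ne_ζ (by omega)
    rw [sperp_succ, sperp_succ, mk2_zero, mk2_one, mk2_zero, mk2_one]
    convert mul_ne_zero (mul_ne_zero (pow_ne_zero 2 r3_ne_zero) r2_ne_zero) (sub_ne_zero.2 hζ)
      using 1
    ring

theorem mem_ker_or_mem_ker_of_inner_χ_tp_eq_zero {α β : EuclideanSpace ℂ (Fin 2 × Fin 2)}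
    {i j : Fin 4} (h : ⟪χ i j, tp α β⟫ = 0) :
    s j ∈ LinearMap.ker (tpForm α (s i)) ∨ sperp j ∈ LinearMap.ker (tpForm β (sperp i)) := by
  rw [χ, inner_tp_tp, mul_eq_zero] at h
  exact h.imp inner_eq_zero_symm.1 inner_eq_zero_symm.1

theorem tpForm_s_eq_zero_or_tpForm_sperp_eq_zero {α β : EuclideanSpace ℂ (Fin 2 × Fin 2)}
    {i : Fin 4} (hi : i ≠ 0) (h : ∀ j, j ≠ i → ⟪χ i j, tp α β⟫ = 0) :
    tpForm α (s i) = 0 ∨ tpForm β (sperp i) = 0 := by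
  have hmem j (hj : j ≠ i) := mem_ker_or_mem_ker_of_inner_χ_tp_eq_zero (h j hj)
  simp only [← LinearMap.ker_eq_top]
  fin_cases i
  · exact absurd rfl hi
  · exact eq_top_or_eq_top_of_mem_or_mem s_pairwise_span_eq_top sperp_pairwise_span_eq_top
      (by decide) (by decide) (by decide)
      (hmem 0 (by decide)) (hmem 2 (by decide)) (hmem 3 (by decide))
  · exact eq_top_or_eq_top_of_mem_or_mem s_pairwise_span_eq_top sperp_pairwise_span_eq_top
      (by decide) (by decide) (by decide)
      (hmem 0 (by decide)) (hmem 1 (by decide)) (hmem 3 (by decide))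
  · exact eq_top_or_eq_top_of_mem_or_mem s_pairwise_span_eq_top sperp_pairwise_span_eq_top
      (by decide) (by decide) (by decide)
      (hmem 0 (by decide)) (hmem 1 (by decide)) (hmem 2 (by decide))

/-- The paper's excluded pair `(1, 2)` is `(0, 1)` in `Fin 4` indexing. -/
theorem antiparallel_double_SIC_2CLSM_subset_UPB
    (α β : EuclideanSpace ℂ (Fin 2 × Fin 2))
    (h : ∀ i j : Fin 4, i ≠ j → (i, j) ≠ ((0 : Fin 4), (1 : Fin 4)) → ⟪χ i j, tp α β⟫ = 0) :
    tp α β = 0 := by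
  have hrow (i : Fin 4) (hi : i ≠ 0) :
      s i ∈ LinearMap.ker (tpForm α) ∨ sperp i ∈ LinearMap.ker (tpForm β) :=
    tpForm_s_eq_zero_or_tpForm_sperp_eq_zero hi fun j hj =>
      h i j hj.symm fun hij => hi (congrArg Prod.fst hij)
  rcases eq_top_or_eq_top_of_mem_or_mem s_pairwise_span_eq_top sperp_pairwise_span_eq_top
      (by decide) (by decide) (by decide) (hrow 1 (by decide)) (hrow 2 (by decide))
      (hrow 3 (by decide)) with hα | hβ
  · rw [tpForm_eq_zero_iff.1 (LinearMap.ker_eq_top.1 hα), ← tpₗ_apply, LinearMap.map_zero₂]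
  · rw [tpForm_eq_zero_iff.1 (LinearMap.ker_eq_top.1 hβ), ← tpₗ_apply, map_zero]
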